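/- The minimum over k with 1 ≤ k ≤ n−1 of 2·X₄(n−k) + 2^k − 1 is attained at some k with n − k equal to a point where f(n−k+1) = k − 1 or k; concretely, if n = t(t+1)/2 + r with 1 ≤ r ≤ t+1, then k = t+1 (equivalently k = t when r ≤ t is also optimal in boundary cases) achieves the minimum, and the minimum value equals X₄(n). -/

import Mathlib

/-- `hanoiF j` is the largest nonnegative integer `m` with `j > m(m+1)/2`. -/
def hanoiF (j : ℕ) : ℕ := Nat.findGreatest (fun m => m * (m + 1) / 2 < j) j

/-- Frame–Stewart move count `X₄(n) = Σ_{j=1}^n 2^{f(j)}`. -/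
def X4 (n : ℕ) : ℕ := ∑ j ∈ Finset.Icc 1 n, 2 ^ hanoiF j

/-!
Writing `n = T(s+1) + q` with `T(s) = s(s+1)/2` and `0 ≤ q ≤ s+1`, one has the closed form
`X₄(T(s) + q) + 2^s = (s+q)·2^s + 1`, which gives `2·X₄(n-(s+1)) + 2^(s+1) - 1 = X₄(n)` directly.
For minimality, the cost `c(k) = 2·X₄(n-k) + 2^k - 1` satisfies
`c(k+1) - c(k) = 2^k - 2^(f(n-k)+1)`. Since `f` is monotone, `f(n-k) ≥ s` for `k ≤ s` and
`f(n-k) ≤ s` for `k ≥ s+1`, so `c` decreases up to `k = s+1` and increases afterwards.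
-/

def triangle (s : ℕ) : ℕ := s * (s + 1) / 2

lemma triangle_succ (s : ℕ) : triangle (s + 1) = triangle s + (s + 1) := by
  have : (s + 1) * (s + 1 + 1) = s * (s + 1) + 2 * (s + 1) := by ring
  unfold triangle
  omega

lemma triangle_mono : Monotone triangle :=
  monotone_nat_of_le_succ fun s => by rw [triangle_succ]; omega

lemma le_triangle (s : ℕ) : s ≤ triangle s := by
  induction s with
  | zero => exact le_rfl
  | succ s ih => rw [triangle_succ]; omega

lemma hanoiF_mono : Monotone hanoiF :=
  fun _ _ h => Nat.findGreatest_mono (fun _ hm => hm.trans_le h) h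

lemma le_hanoiF_triangle_add (s : ℕ) {q : ℕ} (hq : 0 < q) : s ≤ hanoiF (triangle s + q) :=
  Nat.le_findGreatest ((le_triangle s).trans (Nat.le_add_right _ _)) (by unfold triangle; omega)

lemma hanoiF_triangle_add_le {s q : ℕ} (hq : q ≤ s + 1) : hanoiF (triangle s + q) ≤ s := by
  by_contra! h
  have hP : triangle (hanoiF (triangle s + q)) < triangle s + q :=
    Nat.findGreatest_of_ne_zero (P := fun m => m * (m + 1) / 2 < triangle s + q) rfl (by omega)
  have hT := triangle_mono (Nat.succ_le_of_lt h)
  rw [triangle_succ] at hT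
  omega

lemma X4_succ (m : ℕ) : X4 (m + 1) = X4 m + 2 ^ hanoiF (m + 1) :=
  Finset.sum_Icc_succ_top (by omega) _

lemma X4_triangle_add {s q : ℕ} (hq : q ≤ s + 1) :
    X4 (triangle s + q) = X4 (triangle s) + q * 2 ^ s := by
  induction q with
  | zero => simp
  | succ q ih =>
    have hf : hanoiF (triangle s + q + 1) = s :=
      le_antisymm (hanoiF_triangle_add_le hq) (le_hanoiF_triangle_add s q.succ_pos)
    rw [← add_assoc, X4_succ, ih (by omega), add_assoc, hf]
    ring

lemma X4_triangle_add_two_pow (s : ℕ) : X4 (triangle s) + 2 ^ s = s * 2 ^ s + 1 := by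
  induction s with
  | zero => rfl
  | succ s ih =>
    rw [triangle_succ, X4_triangle_add le_rfl, pow_succ]
    linarith

lemma X4_triangle_add_add_two_pow {s q : ℕ} (hq : q ≤ s + 1) :
    X4 (triangle s + q) + 2 ^ s = (s + q) * 2 ^ s + 1 := by
  rw [X4_triangle_add hq]
  linarith [X4_triangle_add_two_pow s]

def splitCost (n k : ℕ) : ℕ := 2 * X4 (n - k) + 2 ^ k - 1

lemma splitCost_triangle_succ_add {s q : ℕ} (hq : q ≤ s + 1) :
    splitCost (triangle (s + 1) + q) (s + 1) = X4 (triangle (s + 1) + q) := by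
  have hlow := X4_triangle_add_add_two_pow hq
  have hhigh := X4_triangle_add_add_two_pow (s := s + 1) (q := q) (by omega)
  have hsub : triangle (s + 1) + q - (s + 1) = triangle s + q := by rw [triangle_succ]; omega
  have hexp : (s + 1 + q) * (2 ^ s * 2) = 2 * ((s + q) * 2 ^ s) + 2 * 2 ^ s := by ring
  rw [pow_succ, hexp] at hhigh
  unfold splitCost
  rw [hsub, pow_succ]
  omega

lemma splitCost_succ_add {n k : ℕ} (hk : k < n) :
    splitCost n (k + 1) + 2 ^ (hanoiF (n - k) + 1) = splitCost n k + 2 ^ k := by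
  obtain ⟨m, hm⟩ : ∃ m, n - k = m + 1 := ⟨n - k - 1, by omega⟩
  have hpos := Nat.one_le_two_pow (n := k)
  unfold splitCost
  rw [show n - (k + 1) = m by omega, hm, X4_succ, pow_succ, pow_succ]
  omega

lemma splitCost_le_succ {n k : ℕ} (hk : k < n) (hf : hanoiF (n - k) < k) :
    splitCost n k ≤ splitCost n (k + 1) := by
  have := splitCost_succ_add hk
  have := Nat.pow_le_pow_right (n := 2) (by norm_num) hf
  omega

lemma splitCost_succ_le {n k : ℕ} (hk : k < n) (hf : k ≤ hanoiF (n - k) + 1) :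
    splitCost n (k + 1) ≤ splitCost n k := by
  have := splitCost_succ_add hk
  have := Nat.pow_le_pow_right (n := 2) (by norm_num) hf
  omega

lemma splitCost_triangle_succ_add_le {s q k : ℕ} (hq : q ≤ s + 1)
    (hk : k ≤ triangle (s + 1) + q) :
    splitCost (triangle (s + 1) + q) (s + 1) ≤ splitCost (triangle (s + 1) + q) k := by
  have hn : triangle (s + 1) + q = triangle s + (s + 1) + q := by rw [triangle_succ]
  have hs := le_triangle s
  rcases le_total k (s + 1) with hks | hks
  · refine antitoneOn_of_add_one_le Set.ordConnected_Icc (fun a _ _ ⟨_, ha⟩ => ?_)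
      (Set.mem_Icc.2 ⟨Nat.zero_le k, hks⟩) (Set.mem_Icc.2 ⟨Nat.zero_le _, le_rfl⟩) hks
    have hf := hanoiF_mono (show triangle s + (1 + q) ≤ triangle (s + 1) + q - a by omega)
    have := le_hanoiF_triangle_add s (q := 1 + q) (by omega)
    exact splitCost_succ_le (by omega) (by omega)
  · refine monotoneOn_of_le_add_one Set.ordConnected_Icc (fun a _ ⟨ha, _⟩ ⟨_, ha'⟩ => ?_)
      (Set.mem_Icc.2 ⟨le_rfl, by omega⟩) (Set.mem_Icc.2 ⟨hks, hk⟩) hks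
    have hf := hanoiF_mono (show triangle (s + 1) + q - a ≤ triangle s + q by omega)
    have := hanoiF_triangle_add_le hq
    exact splitCost_le_succ (by omega) (by omega)

theorem stmt_15_general (t r n : ℕ) (hr2 : r ≤ t + 1)
    (hn : n = t * (t + 1) / 2 + r) (hn2 : 2 ≤ n) :
    (∀ k ∈ Finset.Icc 1 (n - 1), X4 n ≤ 2 * X4 (n - k) + 2 ^ k - 1) ∧
    ∃ k ∈ Finset.Icc 1 (n - 1), (k = t ∨ k = t + 1) ∧
      2 * X4 (n - k) + 2 ^ k - 1 = X4 n := by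
  replace hn : n = triangle t + r := hn
  obtain ⟨s, q, hq, rfl, hst⟩ : ∃ s q, q ≤ s + 1 ∧ n = triangle (s + 1) + q ∧
      (s + 1 = t ∨ s + 1 = t + 1) := by
    rcases Nat.lt_or_ge r (t + 1) with hr | hr
    · cases t with
      | zero => change n = 0 + r at hn; omega
      | succ s => exact ⟨s, r, by omega, hn, Or.inl rfl⟩
    · exact ⟨t, 0, by omega, by rw [triangle_succ]; omega, Or.inr rfl⟩
  have hopt := splitCost_triangle_succ_add hq
  have hmem : s + 1 ∈ Finset.Icc 1 (triangle (s + 1) + q - 1) := by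
    have := le_triangle s
    rw [triangle_succ] at hn2 ⊢
    rw [Finset.mem_Icc]
    omega
  refine ⟨fun k hk => hopt ▸ splitCost_triangle_succ_add_le hq ?_, s + 1, hmem, hst, hopt⟩
  rw [Finset.mem_Icc] at hk
  omega

/-- If `n = t(t+1)/2 + r` with `1 ≤ r ≤ t+1` (and `n ≥ 2`), then the minimum of
`2·X₄(n−k) + 2^k − 1` over `1 ≤ k ≤ n−1` equals `X₄(n)` and is attained at the
split size `k = t+1` (or `k = t` in boundary cases). -/
theorem stmt_15 (t r n : ℕ) (hr1 : 1 ≤ r) (hr2 : r ≤ t + 1)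
    (hn : n = t * (t + 1) / 2 + r) (hn2 : 2 ≤ n) :
    (∀ k ∈ Finset.Icc 1 (n - 1), X4 n ≤ 2 * X4 (n - k) + 2 ^ k - 1) ∧
    ∃ k ∈ Finset.Icc 1 (n - 1), (k = t ∨ k = t + 1) ∧
      2 * X4 (n - k) + 2 ^ k - 1 = X4 n :=
  stmt_15_general t r n hr2 hn hn2
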